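/- Let n > m > ℓ ≥ 2 be integers and let H = ⟨a, b, c | a^(2^n) = 1, b^(2^m) = a^(2^m), c^(2^ℓ) = 1, [b,a] = c, [c,a] = c^(-2), [c,b] = c^(-2)⟩. Let S be a commutative ring of characteristic 4 with a maximal ideal n satisfying 2 ∈ n and 2 ∉ n². Set C = c − 1 in SH and Θ = Δ(SH : n). Then 2C ∉ Θ⁴. -/

import Mathlib

/-!
Map `H` onto the dihedral group `D₁₆ = ⟨r, s⟩` by `a ↦ sr`, `b ↦ s`, `c ↦ r²`, and pair `SH`
with the function `φ` that sends `g` to `⌊i/2⌋`, where `rⁱ` or `s rⁱ` (`0 ≤ i < 8`) is the image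
of `g`: `λ(Σ α_g g) = Σ α_g φ(g)`. Since `λ(x (h - 1))` is `λ(x)` for the right difference
`g ↦ φ(gh) - φ(g)` in place of `φ`, and `λ(x t) = t λ(x)` for `t ∈ S`, `λ` maps `Θᵏ` into an
ideal `I` as soon as `nᵏ⁻ʲ` times every `j`-fold iterated difference of `φ` lies in `I`.
The third differences of `φ` are even and the fourth ones divisible by `4` (a finite check, which
only needs differences along the generators `r`, `s`), so `4 = 0` and `2 ∈ n` give
`λ(Θ⁴) ⊆ n²`; but `λ(2C) = 2 (φ(r²) - φ(1)) = 2 ∉ n²`.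
-/

/-- Relators of the group `H` from the paper:
`H = ⟨a,b,c ∣ a^(2^n) = 1, b^(2^m) = a^(2^m), c^(2^l) = 1, [b,a] = c, [c,a] = c⁻², [c,b] = c⁻²⟩`,
where `[g,h] = g⁻¹h⁻¹gh`.  Generators: `0 ↦ a`, `1 ↦ b`, `2 ↦ c`. -/
def hrels (n m l : ℕ) : Set (FreeGroup (Fin 3)) :=
  {FreeGroup.of 0 ^ 2 ^ n, FreeGroup.of 1 ^ 2 ^ m * (FreeGroup.of 0 ^ 2 ^ m)⁻¹,
   FreeGroup.of 2 ^ 2 ^ l,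
   (FreeGroup.of 1)⁻¹ * (FreeGroup.of 0)⁻¹ * FreeGroup.of 1 * FreeGroup.of 0 * (FreeGroup.of 2)⁻¹,
   (FreeGroup.of 2)⁻¹ * (FreeGroup.of 0)⁻¹ * FreeGroup.of 2 * FreeGroup.of 0 * FreeGroup.of 2 ^ 2,
   (FreeGroup.of 2)⁻¹ * (FreeGroup.of 1)⁻¹ * FreeGroup.of 2 * FreeGroup.of 1 * FreeGroup.of 2 ^ 2}

/-- The group `H` of the paper. -/
def GrpH (n m l : ℕ) : Type := PresentedGroup (hrels n m l)

instance (n m l : ℕ) : Group (GrpH n m l) := by unfold GrpH; infer_instance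

/-- The augmentation map `ε : SH → S`, sending `Σ α_h h` to `Σ α_h`. -/
noncomputable def aug (S : Type) [CommRing S] (G : Type) [Group G] :
    MonoidAlgebra S G →ₐ[S] S := MonoidAlgebra.lift S S G 1

/-- The relative augmentation ideal `Δ(SG : n) = ε⁻¹(n) = {x ∈ SG : ε(x) ∈ n}`. -/
noncomputable def relAugIdeal (S : Type) [CommRing S] (nn : Ideal S) (G : Type) [Group G] :
    Ideal (MonoidAlgebra S G) := Ideal.comap (aug S G) nn

/-- `A = a - 1 ∈ SH`. -/
noncomputable def elA (S : Type) [CommRing S] (n m l : ℕ) : MonoidAlgebra S (GrpH n m l) :=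
  MonoidAlgebra.of S (GrpH n m l) (PresentedGroup.of 0) - 1
/-- `B = b - 1 ∈ SH`. -/
noncomputable def elB (S : Type) [CommRing S] (n m l : ℕ) : MonoidAlgebra S (GrpH n m l) :=
  MonoidAlgebra.of S (GrpH n m l) (PresentedGroup.of 1) - 1
/-- `C = c - 1 ∈ SH`. -/
noncomputable def elC (S : Type) [CommRing S] (n m l : ℕ) : MonoidAlgebra S (GrpH n m l) :=
  MonoidAlgebra.of S (GrpH n m l) (PresentedGroup.of 2) - 1

section Differences

variable {G M : Type*} [Group G] [AddCommGroup M]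

def rightDiff (h : G) (φ : G → M) : G → M := fun g => φ (g * h) - φ g

def iterDiff : List G → (G → M) → G → M
  | [], φ => φ
  | h :: L, φ => iterDiff L (rightDiff h φ)

@[simp] theorem iterDiff_nil (φ : G → M) : iterDiff [] φ = φ := rfl

@[simp] theorem iterDiff_cons (h : G) (L : List G) (φ : G → M) :
    iterDiff (h :: L) φ = iterDiff L (rightDiff h φ) := rfl

theorem iterDiff_zero (L : List G) : iterDiff L (0 : G → M) = 0 := by
  induction L with
  | nil => rfl
  | cons h L ih =>
    have : rightDiff h (0 : G → M) = 0 := by ext; simp [rightDiff]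
    rw [iterDiff_cons, this, ih]

theorem iterDiff_add (L : List G) (φ ψ : G → M) :
    iterDiff L (φ + ψ) = iterDiff L φ + iterDiff L ψ := by
  induction L generalizing φ ψ with
  | nil => rfl
  | cons h L ih =>
    have : rightDiff h (φ + ψ) = rightDiff h φ + rightDiff h ψ := by
      ext g; simp only [rightDiff, Pi.add_apply]; abel
    simp [this, ih]

theorem rightDiff_mul (a b : G) (φ : G → M) :
    rightDiff (a * b) φ = (fun g => rightDiff b φ (g * a)) + rightDiff a φ := by
  ext g; simp only [rightDiff, Pi.add_apply, mul_assoc]; abel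

theorem iterDiff_mul_right (L : List G) (a : G) (φ : G → M) :
    iterDiff L (fun g => φ (g * a)) =
      fun g => iterDiff (L.map fun h => a⁻¹ * h * a) φ (g * a) := by
  induction L generalizing φ with
  | nil => rfl
  | cons h L ih =>
    have : rightDiff h (fun g => φ (g * a)) = fun g => rightDiff (a⁻¹ * h * a) φ (g * a) := by
      ext g; simp [rightDiff, mul_assoc]
    simp only [iterDiff_cons, List.map_cons, this, ih]

theorem iterDiff_comp_monoidHom {G' : Type*} [Group G'] (ψ : G →* G') (φ : G' → M) (L : List G) :
    iterDiff L (φ ∘ ψ) = iterDiff (L.map ψ) φ ∘ ψ := by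
  induction L generalizing φ with
  | nil => rfl
  | cons h L ih =>
    have : rightDiff h (φ ∘ ψ) = rightDiff (ψ h) φ ∘ ψ := by ext g; simp [rightDiff]
    simp only [iterDiff_cons, List.map_cons, this, ih]

theorem iterDiff_addMonoidHom_comp {N : Type*} [AddCommGroup N] (F : M →+ N) (φ : G → M)
    (L : List G) : iterDiff L (F ∘ φ) = F ∘ iterDiff L φ := by
  induction L generalizing φ with
  | nil => rfl
  | cons h L ih =>
    have : rightDiff h (F ∘ φ) = F ∘ rightDiff h φ := by ext g; simp [rightDiff]
    simp only [iterDiff_cons, this, ih]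

theorem iterDiff_mem_of_closure_eq_top {s : Set G} (hs : Submonoid.closure s = ⊤)
    (T : AddSubgroup M) : ∀ (k : ℕ) (φ : G → M),
      (∀ L : List G, L.length = k → (∀ x ∈ L, x ∈ s) → ∀ g, iterDiff L φ g ∈ T) →
      ∀ L : List G, L.length = k → ∀ g, iterDiff L φ g ∈ T
  | 0, φ, hφ, [], _, g => hφ [] rfl (by simp) g
  | k + 1, φ, hφ, h :: L, hL, g => by
    show iterDiff L (rightDiff h φ) g ∈ T
    -- by `rightDiff_mul` and `iterDiff_mul_right`, the admissible first steps `h` form a submonoid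
    replace hL : L.length = k := by simpa using hL
    have hmem : h ∈ Submonoid.closure s := hs ▸ Submonoid.mem_top h
    induction hmem using Submonoid.closure_induction generalizing L g with
    | mem a ha =>
      exact iterDiff_mem_of_closure_eq_top hs T k (rightDiff a φ)
        (fun L' hL' hL's => hφ (a :: L') (by simp [hL']) (by simp_all)) L hL g
    | one =>
      have : rightDiff (1 : G) φ = 0 := by ext; simp [rightDiff]
      simp [this, iterDiff_zero]
    | mul a b _ _ ha hb =>
      rw [rightDiff_mul, iterDiff_add, iterDiff_mul_right, Pi.add_apply]
      exact add_mem (hb _ _ (by simpa using hL)) (ha L g hL)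

end Differences

open DihedralGroup

def halfIndex : DihedralGroup 8 → ℤ
  | r i => (i.val / 2 : ℕ)
  | sr i => (i.val / 2 : ℕ)

theorem closure_r_one_sr_zero :
    Submonoid.closure {r 1, sr 0} = (⊤ : Submonoid (DihedralGroup 8)) := by
  refine eq_top_iff.2 fun g _ => ?_
  have hr : ∀ i : ZMod 8, r i ∈ Submonoid.closure {r 1, sr 0} := fun i => by
    rw [← ZMod.natCast_zmod_val i, ← r_one_pow]
    exact pow_mem (Submonoid.subset_closure (by simp)) _
  cases g with
  | r i => exact hr i
  | sr i =>
    rw [← zero_add i, ← sr_mul_r]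
    exact mul_mem (Submonoid.subset_closure (by simp)) (hr i)

theorem halfIndex_iterDiff_dvd_of_length_eq_three (L : List (DihedralGroup 8)) (hL : L.length = 3)
    (g : DihedralGroup 8) : (2 : ℤ) ∣ iterDiff L halfIndex g := by
  refine Int.mem_zmultiples_iff.1 <| iterDiff_mem_of_closure_eq_top closure_r_one_sr_zero
    (AddSubgroup.zmultiples 2) 3 halfIndex ?_ L hL g
  rintro (_ | ⟨a, _ | ⟨b, _ | ⟨c, _ | _⟩⟩⟩) hL hs g <;> simp only [List.length_cons,
    List.length_nil] at hL <;> try omega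
  simp only [List.mem_cons, List.not_mem_nil, or_false, forall_eq_or_imp, forall_eq,
    Set.mem_insert_iff, Set.mem_singleton_iff] at hs
  rw [Int.mem_zmultiples_iff]
  obtain ⟨rfl | rfl, rfl | rfl, rfl | rfl⟩ := hs <;> revert g <;> decide

theorem halfIndex_iterDiff_dvd_of_length_eq_four (L : List (DihedralGroup 8)) (hL : L.length = 4)
    (g : DihedralGroup 8) : (4 : ℤ) ∣ iterDiff L halfIndex g := by
  refine Int.mem_zmultiples_iff.1 <| iterDiff_mem_of_closure_eq_top closure_r_one_sr_zero
    (AddSubgroup.zmultiples 4) 4 halfIndex ?_ L hL g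
  rintro (_ | ⟨a, _ | ⟨b, _ | ⟨c, _ | ⟨d, _ | _⟩⟩⟩⟩) hL hs g <;> simp only [List.length_cons,
    List.length_nil] at hL <;> try omega
  simp only [List.mem_cons, List.not_mem_nil, or_false, forall_eq_or_imp, forall_eq,
    Set.mem_insert_iff, Set.mem_singleton_iff] at hs
  rw [Int.mem_zmultiples_iff]
  obtain ⟨rfl | rfl, rfl | rfl, rfl | rfl, rfl | rfl⟩ := hs <;> revert g <;> decide

section Pairing

variable {S G : Type} [CommRing S]

noncomputable def pairing (φ : G → S) : MonoidAlgebra S G →ₗ[S] S :=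
  Finsupp.linearCombination S φ ∘ₗ (MonoidAlgebra.coeffLinearEquiv S).toLinearMap

@[simp] theorem pairing_single (φ : G → S) (g : G) (s : S) :
    pairing φ (MonoidAlgebra.single g s) = s * φ g := by
  simp [pairing]

theorem pairing_of [Monoid G] (φ : G → S) (g : G) : pairing φ (MonoidAlgebra.of S G g) = φ g := by
  simp [MonoidAlgebra.of_apply]

theorem pairing_one [Monoid G] (φ : G → S) : pairing φ 1 = φ 1 := by
  simp [MonoidAlgebra.one_def]

theorem pairing_mem_of_forall_mem {I : Ideal S} {φ : G → S} (hφ : ∀ g, φ g ∈ I)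
    (x : MonoidAlgebra S G) : pairing φ x ∈ I := by
  induction x using MonoidAlgebra.induction_linear with
  | zero => simp
  | add x y hx hy => rw [map_add]; exact add_mem hx hy
  | single g s => rw [pairing_single]; exact I.mul_mem_left s (hφ g)

theorem pairing_sub (φ ψ : G → S) (x : MonoidAlgebra S G) :
    pairing (φ - ψ) x = pairing φ x - pairing ψ x := by
  induction x using MonoidAlgebra.induction_linear with
  | zero => simp
  | add x y hx hy => rw [map_add, map_add, map_add, hx, hy]; ring
  | single g t => simp only [pairing_single, Pi.sub_apply]; ring

variable [Group G]

theorem pairing_mul_single (φ : G → S) (x : MonoidAlgebra S G) (h : G) (s : S) :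
    pairing φ (x * MonoidAlgebra.single h s) = s * pairing (fun g => φ (g * h)) x := by
  induction x using MonoidAlgebra.induction_linear with
  | zero => simp
  | add x y hx hy => rw [add_mul, map_add, map_add, hx, hy, mul_add]
  | single g t => simp only [MonoidAlgebra.single_mul_single, pairing_single]; ring

theorem pairing_mul_sub_aug_mul_mem {I : Ideal S} {φ : G → S} {x : MonoidAlgebra S G}
    (hx : ∀ h, pairing (rightDiff h φ) x ∈ I) (y : MonoidAlgebra S G) :
    pairing φ (x * y) - aug S G y * pairing φ x ∈ I := by
  induction y using MonoidAlgebra.induction_linear with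
  | zero => simp
  | add y z hy hz =>
    convert add_mem hy hz using 1
    rw [mul_add, map_add, map_add, add_mul]; ring
  | single h s =>
    have hdiff : pairing (rightDiff h φ) x = pairing (fun g => φ (g * h)) x - pairing φ x :=
      pairing_sub _ _ x
    rw [pairing_mul_single, aug, MonoidAlgebra.lift_single, smul_eq_mul, MonoidHom.one_apply,
      mul_one, ← mul_sub, ← hdiff]
    exact I.mul_mem_left s (hx h)

theorem pairing_mem_of_mem_relAugIdeal_pow {nn I : Ideal S} (k : ℕ) {φ : G → S}
    (hφ : ∀ L : List G, L.length ≤ k → ∀ g, ∀ s ∈ nn ^ (k - L.length),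
      s * iterDiff L φ g ∈ I)
    {x : MonoidAlgebra S G} (hx : x ∈ relAugIdeal S nn G ^ k) : pairing φ x ∈ I := by
  induction k generalizing φ I x with
  | zero => exact pairing_mem_of_forall_mem (fun g => by simpa using hφ [] le_rfl g 1 (by simp)) x
  | succ k ih =>
    rw [Submodule.pow_succ] at hx
    refine Submodule.smul_induction_on (p := fun x => pairing φ x ∈ I) hx
      (fun x hx y hy => ?_) (fun x y hx hy => by rw [map_add]; exact add_mem hx hy)
    have hdiff : ∀ h, pairing (rightDiff h φ) x ∈ I := fun h =>
      ih (fun L hL g s hs => hφ (h :: L) (by simpa using hL) g s (by simpa using hs)) hx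
    -- the scalar part `aug y` of a factor `y ∈ Θ` is absorbed by passing to the colon ideal
    have hcolon : pairing φ x ∈ I.colon (nn : Set S) := by
      refine ih (fun L hL g s hs => Submodule.mem_colon.2 fun t ht => ?_) hx
      have hst : s * t ∈ nn ^ (k + 1 - L.length) := by
        rw [show k + 1 - L.length = k - L.length + 1 by omega, pow_succ]
        exact Ideal.mul_mem_mul hs ht
      simpa [mul_right_comm] using hφ L (by omega) g _ hst
    rw [smul_eq_mul, ← sub_add_cancel (pairing φ (x * y)) (aug S G y * pairing φ x)]
    exact add_mem (pairing_mul_sub_aug_mul_mem hdiff y)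
      (mul_comm (aug S G y) _ ▸ Submodule.mem_colon.1 hcolon _ hy)

end Pairing

theorem pow_two_pow_eq_one {G : Type*} [Monoid G] {x : G} {j k : ℕ} (hx : x ^ 2 ^ j = 1)
    (hjk : j ≤ k) : x ^ 2 ^ k = 1 :=
  orderOf_dvd_iff_pow_eq_one.1 ((orderOf_dvd_of_pow_eq_one hx).trans (pow_dvd_pow 2 hjk))

def dihedralGen : Fin 3 → DihedralGroup 8
  | 0 => sr 1
  | 1 => sr 0
  | 2 => r 2

theorem lift_dihedralGen_eq_one_of_mem_hrels {n m l : ℕ} (h1 : n > m) (h2 : m > l) (h3 : 2 ≤ l) :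
    ∀ rel ∈ hrels n m l, FreeGroup.lift dihedralGen rel = 1 := by
  have hsr : ∀ (i : ZMod 8) (k : ℕ), 1 ≤ k → sr i ^ 2 ^ k = 1 := fun i k hk =>
    pow_two_pow_eq_one (j := 1) (by rw [pow_one, sq, sr_mul_self]) hk
  simp only [hrels, Set.mem_insert_iff, Set.mem_singleton_iff]
  rintro rel (rfl | rfl | rfl | rfl | rfl | rfl) <;>
    simp only [map_mul, map_inv, map_pow, FreeGroup.lift_apply_of, dihedralGen]
  · exact hsr 1 n (by omega)
  · rw [hsr 0 m (by omega), hsr 1 m (by omega), inv_one, mul_one]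
  · exact pow_two_pow_eq_one (j := 2) (by decide) h3
  all_goals decide

noncomputable def GrpH.toDihedral (n m l : ℕ) (h1 : n > m) (h2 : m > l) (h3 : 2 ≤ l) :
    GrpH n m l →* DihedralGroup 8 :=
  PresentedGroup.toGroup (lift_dihedralGen_eq_one_of_mem_hrels h1 h2 h3)

theorem mul_iterDiff_halfIndex_comp_mem {G S : Type} [Group G] [CommRing S]
    (ψ : G →* DihedralGroup 8) {nn : Ideal S} (h4 : (4 : S) = 0) (h2n : (2 : S) ∈ nn)
    (L : List G) (hL : L.length ≤ 4) (g : G) (s : S) (hs : s ∈ nn ^ (4 - L.length)) :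
    s * iterDiff L (fun x => (halfIndex (ψ x) : S)) g ∈ nn ^ 2 := by
  have hcast : iterDiff L (fun x => (halfIndex (ψ x) : S)) g =
      ((iterDiff (L.map ψ) halfIndex (ψ g) : ℤ) : S) :=
    congrFun ((iterDiff_addMonoidHom_comp (Int.castAddHom S) (halfIndex ∘ ψ) L).trans
      (congrArg _ (iterDiff_comp_monoidHom ψ halfIndex L))) g
  rw [hcast]
  rcases (show L.length ≤ 2 ∨ L.length = 3 ∨ L.length = 4 by omega) with hle | hthree | hfour
  · exact Ideal.mul_mem_right _ _ (Ideal.pow_le_pow_right (by omega) hs)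
  · obtain ⟨w, hw⟩ :=
      halfIndex_iterDiff_dvd_of_length_eq_three (L.map ψ) (by simpa using hthree) (ψ g)
    rw [hthree, pow_one] at hs
    rw [hw, Int.cast_mul, Int.cast_two, ← mul_assoc, pow_two]
    exact Ideal.mul_mem_right _ _ (Ideal.mul_mem_mul hs h2n)
  · obtain ⟨w, hw⟩ :=
      halfIndex_iterDiff_dvd_of_length_eq_four (L.map ψ) (by simpa using hfour) (ψ g)
    rw [hw, Int.cast_mul, Int.cast_ofNat, h4, zero_mul, mul_zero]
    exact zero_mem _

theorem stmt16_general (n m l : ℕ) (h1 : n > m) (h2 : m > l) (h3 : 2 ≤ l)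
    (S : Type) [CommRing S] (hchar : CharP S 4)
    (nn : Ideal S) (h2n : (2 : S) ∈ nn) (h2n2 : (2 : S) ∉ nn ^ 2) :
    2 * elC S n m l ∉ relAugIdeal S nn (GrpH n m l) ^ 4 := by
  intro hmem
  have h4 : (4 : S) = 0 := by exact_mod_cast CharP.cast_eq_zero S 4
  set ψ := GrpH.toDihedral n m l h1 h2 h3
  obtain ⟨c, hC, hc⟩ : ∃ c : GrpH n m l, elC S n m l = MonoidAlgebra.of S _ c - 1 ∧ ψ c = r 2 :=
    ⟨PresentedGroup.of 2, rfl, PresentedGroup.toGroup.of _⟩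
  have hval : pairing (fun g => (halfIndex (ψ g) : S)) (2 * elC S n m l) = 2 := by
    rw [hC, two_mul, map_add, map_sub, pairing_of, pairing_one, hc, map_one,
      show halfIndex (r 2) = 1 by decide, show halfIndex 1 = 0 by decide]
    norm_num
  exact h2n2 (hval ▸ pairing_mem_of_mem_relAugIdeal_pow 4
    (mul_iterDiff_halfIndex_comp_mem ψ h4 h2n) hmem)

theorem stmt16 (n m l : ℕ) (h1 : n > m) (h2 : m > l) (h3 : 2 ≤ l)
    (S : Type) [CommRing S] (hchar : CharP S 4)
    (nn : Ideal S) (hnn : nn.IsMaximal) (h2n : (2 : S) ∈ nn) (h2n2 : (2 : S) ∉ nn ^ 2) :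
    2 * elC S n m l ∉ relAugIdeal S nn (GrpH n m l) ^ 4 :=
  stmt16_general n m l h1 h2 h3 S hchar nn h2n h2n2
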